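/- Let (A,(p_l)) be a non-unital Fréchet algebra that is a Montel space, and let n ∈ ℕ, n ≥ 1. If A is (2n−1)-weakly amenable, then the unitization A# is (2n−1)-weakly amenable. -/

import Mathlib

noncomputable section

open Filter Topology

/-- A topological `ℂ`-module `X` equipped with left and right actions of `A`,
each acting by continuous linear maps on `X`.  This is the data underlying a
locally convex `A`-bimodule. -/
structure BiMod (A : Type) : Type 1 where
  X : Type
  [ag : AddCommGroup X]
  [md : Module ℂ X]
  [ts : TopologicalSpace X]
  l : A → X →L[ℂ] X
  r : A → X →L[ℂ] X

attribute [instance] BiMod.ag BiMod.md BiMod.ts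

namespace BiMod

variable {A : Type}

/-- The strong dual of a bimodule, with the canonical dual actions
`⟨a·f, x⟩ = ⟨f, x·a⟩` and `⟨f·a, x⟩ = ⟨f, a·x⟩`.  The dual carries the strong
topology (uniform convergence on von Neumann bounded sets), which is the default
topology on `X →L[ℂ] ℂ` in Mathlib. -/
def dual (M : BiMod A) : BiMod A where
  X := M.X →L[ℂ] ℂ
  l a := ContinuousLinearMap.precomp ℂ (M.r a)
  r a := ContinuousLinearMap.precomp ℂ (M.l a)

/-- The `n`-th iterated strong dual of a bimodule (`iterDual M 0 = M`). -/
def iterDual (M : BiMod A) : ℕ → BiMod A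
  | 0 => M
  | n + 1 => (M.iterDual n).dual

instance dualCSM (M : BiMod A) : ContinuousSMul ℂ (M.dual).X :=
  inferInstanceAs (ContinuousSMul ℂ (M.X →L[ℂ] ℂ))

/-- Evaluation (canonical) embedding of a bimodule into its double dual. -/
def evalEmbed (M : BiMod A) [ContinuousSMul ℂ M.X] (x : M.X) : M.dual.dual.X :=
  show (M.X →L[ℂ] ℂ) →L[ℂ] ℂ from
    ⟨⟨⟨fun f => f x, fun _ _ => rfl⟩, fun _ _ => rfl⟩, continuous_eval_const x⟩

/-- `ContinuousSMul` holds at every level of the iterated dual. -/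
def iterCSM (M : BiMod A) (h : ContinuousSMul ℂ M.X) :
    ∀ n, ContinuousSMul ℂ (M.iterDual n).X
  | 0 => h
  | n + 1 => inferInstanceAs (ContinuousSMul ℂ ((M.iterDual n).X →L[ℂ] ℂ))

/-- The canonical (iterated evaluation) embedding `M → M^(2n)`. -/
def iterEmbed (M : BiMod A) (h : ContinuousSMul ℂ M.X) :
    ∀ n : ℕ, M.X → (M.iterDual (2 * n)).X
  | 0, x => x
  | n + 1, x =>
    haveI := M.iterCSM h (2 * n)
    (M.iterDual (2 * n)).evalEmbed (M.iterEmbed h n x)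

/-- The pairing between the `(k+1)`-st dual and the `k`-th dual. -/
def pairApply (M : BiMod A) (k : ℕ) (F : (M.iterDual (k + 1)).X)
    (x : (M.iterDual k).X) : ℂ := (show (M.iterDual k).X →L[ℂ] ℂ from F) x

end BiMod

section Defs

variable (A : Type) [NonUnitalRing A] [Module ℂ A] [SMulCommClass ℂ A A] [IsScalarTower ℂ A A]
  [TopologicalSpace A] [IsTopologicalAddGroup A] [ContinuousSMul ℂ A] [ContinuousMul A]

/-- A continuous derivation from `A` into a bimodule. -/
def IsContDerivation (M : BiMod A) (D : A →L[ℂ] M.X) : Prop :=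
  ∀ a b : A, D (a * b) = M.l a (D b) + M.r b (D a)

/-- An inner derivation : `D a = a·x - x·a` for some `x`. -/
def IsInnerDerivation (M : BiMod A) (D : A →L[ℂ] M.X) : Prop :=
  ∃ x : M.X, ∀ a : A, D a = M.l a x - M.r a x

/-- `A` as a bimodule over itself, via left/right multiplication. -/
def selfBiMod : BiMod A where
  X := A
  l a := ⟨LinearMap.mulLeft ℂ a, continuous_mul_left a⟩
  r a := ⟨LinearMap.mulRight ℂ a, continuous_mul_right a⟩

/-- `A` is `n`-weakly amenable if every continuous derivation from `A` into the
`n`-th iterated strong dual `A^(n)` (with the canonical module actions) is inner. -/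
def NWeaklyAmenable (n : ℕ) : Prop :=
  ∀ D : A →L[ℂ] ((selfBiMod A).iterDual n).X,
    IsContDerivation A ((selfBiMod A).iterDual n) D →
      IsInnerDerivation A ((selfBiMod A).iterDual n) D

/-- A closed two-sided ideal `I` of `A` (a closed `ℂ`-subalgebra which absorbs
multiplication on both sides) as an `A`-bimodule. -/
def idealBiMod (I : NonUnitalSubalgebra ℂ A)
    (hl : ∀ a : A, ∀ x ∈ I, a * x ∈ I) (hr : ∀ a : A, ∀ x ∈ I, x * a ∈ I) : BiMod A where
  X := ↥I
  l a := ⟨{ toFun := fun x => (⟨a * (x : A), hl a x x.2⟩ : ↥I)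
            map_add' := fun x y => by ext; simp [mul_add]
            map_smul' := fun c x => by ext; simp [mul_smul_comm] },
          (Continuous.subtype_mk ((continuous_mul_left a).comp continuous_subtype_val) _)⟩
  r a := ⟨{ toFun := fun x => (⟨(x : A) * a, hr a x x.2⟩ : ↥I)
            map_add' := fun x y => by ext; simp [add_mul]
            map_smul' := fun c x => by ext; simp [smul_mul_assoc] },
          (Continuous.subtype_mk ((continuous_mul_right a).comp continuous_subtype_val) _)⟩

/-- `A` is `n`-ideally amenable if for every closed two-sided ideal `I` of `A`,
every continuous derivation from `A` into `I^(n)` is inner. -/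
def NIdeallyAmenable (n : ℕ) : Prop :=
  ∀ (I : NonUnitalSubalgebra ℂ A), IsClosed (I : Set A) →
    ∀ (hl : ∀ a : A, ∀ x ∈ I, a * x ∈ I) (hr : ∀ a : A, ∀ x ∈ I, x * a ∈ I),
      ∀ D : A →L[ℂ] ((idealBiMod A I hl hr).iterDual n).X,
        IsContDerivation A ((idealBiMod A I hl hr).iterDual n) D →
          IsInnerDerivation A ((idealBiMod A I hl hr).iterDual n) D

/-- The topology of `A` is generated by an increasing sequence of submultiplicative
seminorms.  Together with completeness and Hausdorffness this says that `A` is a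
Fréchet algebra. -/
def FrechetSeminorms : Prop :=
  ∃ p : SeminormFamily ℂ A ℕ, WithSeminorms p ∧ (∀ n, p n ≤ p (n + 1)) ∧
    ∀ (n : ℕ) (x y : A), p n (x * y) ≤ p n x * p n y

/-- `A` has an identity element. -/
def HasIdentity : Prop := ∃ e : A, ∀ a : A, e * a = a ∧ a * e = a

end Defs

section Montel

variable (E : Type) [AddCommGroup E] [Module ℂ E] [TopologicalSpace E]

/-- A Montel space: a barrelled locally convex Hausdorff space in which every closed
(von Neumann) bounded subset is compact. -/
def IsMontelSpace : Prop :=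
  LocallyConvexSpace ℝ E ∧ T2Space E ∧ BarrelledSpace ℂ E ∧
    ∀ s : Set E, IsClosed s → Bornology.IsVonNBounded ℂ s → IsCompact s

end Montel

section More

variable (A : Type) [NonUnitalRing A] [Module ℂ A] [SMulCommClass ℂ A A] [IsScalarTower ℂ A A]
  [TopologicalSpace A] [IsTopologicalAddGroup A] [ContinuousSMul ℂ A] [ContinuousMul A]

/-- A bounded approximate identity: a bounded net `(e_i)` with `e_i * a → a` and
`a * e_i → a` for every `a`. -/
def HasBoundedApproxIdentity : Prop :=
  ∃ (ι : Type) (_ : Preorder ι) (_ : IsDirected ι (· ≤ ·)) (_ : Nonempty ι) (e : ι → A),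
    Bornology.IsVonNBounded ℂ (Set.range e) ∧
      ∀ a : A, Tendsto (fun i => e i * a) atTop (𝓝 a) ∧
        Tendsto (fun i => a * e i) atTop (𝓝 a)

/-- `A` is essential: the linear span of products is dense. -/
def IsEssential : Prop :=
  Dense ((Submodule.span ℂ {x : A | ∃ a b : A, x = a * b} : Submodule ℂ A) : Set A)

/-- `A` is self-induced: it is essential and every balanced bilinear functional
`φ` (i.e. `φ (a*c) b = φ a (c*b)`) is of the form `φ a b = f (a*b)` for some
continuous linear functional `f`. -/
def SelfInduced : Prop :=
  IsEssential A ∧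
    ∀ φ : A →ₗ[ℂ] A →ₗ[ℂ] ℂ, (∀ a b c : A, φ (a * c) b = φ a (c * b)) →
      ∃ f : A →L[ℂ] ℂ, ∀ a b : A, φ a b = f (a * b)

/-- The data of `M : BiMod A` constitutes a genuine locally convex `A`-bimodule:
the actions satisfy the bimodule laws, are `ℂ`-bilinear, jointly continuous, and
`M.X` is locally convex. -/
structure IsLCBimod (M : BiMod A) : Prop where
  lc : LocallyConvexSpace ℝ M.X
  l_mul : ∀ (a b : A) (x : M.X), M.l (a * b) x = M.l a (M.l b x)
  r_mul : ∀ (a b : A) (x : M.X), M.r (a * b) x = M.r b (M.r a x)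
  l_add : ∀ (a b : A) (x : M.X), M.l (a + b) x = M.l a x + M.l b x
  r_add : ∀ (a b : A) (x : M.X), M.r (a + b) x = M.r a x + M.r b x
  l_smul : ∀ (c : ℂ) (a : A) (x : M.X), M.l (c • a) x = c • M.l a x
  r_smul : ∀ (c : ℂ) (a : A) (x : M.X), M.r (c • a) x = c • M.r a x
  lr_comm : ∀ (a b : A) (x : M.X), M.l a (M.r b x) = M.r b (M.l a x)
  cont_l : Continuous fun q : A × M.X => M.l q.1 q.2
  cont_r : Continuous fun q : A × M.X => M.r q.1 q.2

/-- `A` is amenable: for every locally convex `A`-bimodule `X`, every continuous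
derivation from `A` into the strong dual `X*` (with the canonical dual actions)
is inner. -/
def Amenable : Prop :=
  ∀ M : BiMod A, IsLCBimod A M →
    ∀ D : A →L[ℂ] M.dual.X, IsContDerivation A M.dual D → IsInnerDerivation A M.dual D

end More

section UnitizationInstances

variable (A : Type) [NonUnitalRing A] [Module ℂ A] [SMulCommClass ℂ A A] [IsScalarTower ℂ A A]
  [TopologicalSpace A] [IsTopologicalAddGroup A] [ContinuousSMul ℂ A] [ContinuousMul A]

/-- The unitization `A# = ℂ ⊕ A` carries the product topology, which is the topology
generated by the seminorms `q_l (a, λ) = p_l a + |λ|`. -/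
instance : TopologicalSpace (Unitization ℂ A) :=
  TopologicalSpace.induced Unitization.toProd inferInstance

instance : IsTopologicalAddGroup (Unitization ℂ A) :=
  Topology.IsInducing.topologicalAddGroup (Unitization.addEquiv ℂ A) ⟨rfl⟩

instance : ContinuousSMul ℂ (Unitization ℂ A) :=
  Topology.IsInducing.continuousSMul (g := (Unitization.toProd : Unitization ℂ A → ℂ × A))
    ⟨rfl⟩ continuous_id rfl

instance : ContinuousMul (Unitization ℂ A) where
  continuous_mul := by
    have hi : Topology.IsInducing (Unitization.toProd : Unitization ℂ A → ℂ × A) := ⟨rfl⟩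
    rw [hi.continuous_iff]
    have hc : Continuous fun p : (ℂ × A) × ℂ × A =>
        ((p.1.1 * p.2.1, p.1.1 • p.2.2 + p.2.1 • p.1.2 + p.1.2 * p.2.2) : ℂ × A) := by
      fun_prop
    exact hc.comp (hi.continuous.prodMap hi.continuous)

end UnitizationInstances

/-!
Let `D : A# → A#^(2m+1)` be a derivation. Transported along the maps induced by `inr : A → A#`
and `snd : A# → A` it becomes a derivation `A → A^(2m+1)`, which is inner, implemented by some
`f`; let `g ∈ A#^(2m+1)` be the image of `f`. The iterated duals of `A# = A ⊕ ℂ` split as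
`A#^(t) = A^(t) ⊕ ℂ e_t`, where `(e_t, e*_t)` are the images of `(1, e*)`, so the defect
`Φ a = D a - (a·g - g·a)`, which vanishes on `A^(2m)`, is `ψ a • e*_(2m)` with
`ψ a = ⟨D a, e_(2m)⟩` continuous. Since `A` annihilates `e*_(2m)` on both sides and `Φ` is a
derivation, `ψ` kills products. Odd weak amenability makes `A` essential, so `ψ = 0`; as
`D 1 = 0`, `D = ad g` on all of `A#`.
-/

namespace BiMod

open Function

variable {α β : Type}

def toFunctional (M : BiMod α) {t : ℕ} (F : (M.iterDual (t + 1)).X) :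
    (M.iterDual t).X →L[ℂ] ℂ := F

def ad (M : BiMod α) (g : M.X) (a : α) : M.X := M.l a g - M.r a g

lemma evalEmbed_zero (M : BiMod α) [ContinuousSMul ℂ M.X] : M.evalEmbed 0 = 0 :=
  ContinuousLinearMap.ext fun F => map_zero (show M.X →L[ℂ] ℂ from F)

section IterEvalPair

variable (M : BiMod α) [h : ContinuousSMul ℂ M.X] (x : M.X) (φ : M.X →L[ℂ] ℂ)

/-- The images of `x ∈ M` and `φ ∈ M'` in `M^(t)` and `M^(t+1)`: at each step the functional
becomes the new element and the old element is replaced by its evaluation functional. -/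
def iterEvalPair : ∀ t, (M.iterDual t).X × (M.iterDual (t + 1)).X
  | 0 => (x, φ)
  | t + 1 =>
    have := M.iterCSM h t
    ((iterEvalPair t).2, (M.iterDual t).evalEmbed (iterEvalPair t).1)

lemma iterEvalPair_snd_apply_fst :
    ∀ t, M.toFunctional (M.iterEvalPair x φ t).2 (M.iterEvalPair x φ t).1 = φ x
  | 0 => rfl
  | t + 1 => iterEvalPair_snd_apply_fst t

lemma iterEvalPair_fst_l_eq_r {a : α} (ha : M.l a x = M.r a x) :
    ∀ t, (M.iterDual (2 * t)).l a (M.iterEvalPair x φ (2 * t)).1 =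
      (M.iterDual (2 * t)).r a (M.iterEvalPair x φ (2 * t)).1
  | 0 => ha
  | t + 1 => by
    have := M.iterCSM h (2 * t)
    exact congrArg (M.iterDual (2 * t)).evalEmbed (iterEvalPair_fst_l_eq_r ha t)

lemma iterEvalPair_snd_l_eq_zero {a : α} (hφ : φ.comp (M.r a) = 0) :
    ∀ t, (M.iterDual (2 * t + 1)).l a (M.iterEvalPair x φ (2 * t)).2 = 0
  | 0 => hφ
  | t + 1 => by
    have := M.iterCSM h (2 * t + 1)
    exact (congrArg (M.iterDual (2 * t + 1)).evalEmbed (iterEvalPair_snd_l_eq_zero hφ t)).trans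
      (M.iterDual (2 * t + 1)).evalEmbed_zero

lemma iterEvalPair_snd_r_eq_zero {a : α} (hφ : φ.comp (M.l a) = 0) :
    ∀ t, (M.iterDual (2 * t + 1)).r a (M.iterEvalPair x φ (2 * t)).2 = 0
  | 0 => hφ
  | t + 1 => by
    have := M.iterCSM h (2 * t + 1)
    exact (congrArg (M.iterDual (2 * t + 1)).evalEmbed (iterEvalPair_snd_r_eq_zero hφ t)).trans
      (M.iterDual (2 * t + 1)).evalEmbed_zero

end IterEvalPair

section IterTranspose

variable (M : BiMod α) (N : BiMod β) (u : M.X →L[ℂ] N.X) (v : N.X →L[ℂ] M.X)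

def iterTranspose : ∀ t,
    ((M.iterDual t).X →L[ℂ] (N.iterDual t).X) × ((N.iterDual t).X →L[ℂ] (M.iterDual t).X)
  | 0 => (u, v)
  | t + 1 => (ContinuousLinearMap.precomp ℂ (iterTranspose t).2,
      ContinuousLinearMap.precomp ℂ (iterTranspose t).1)

variable {M N u v}

lemma iterTranspose_snd_fst (hvu : ∀ x, v (u x) = x) :
    ∀ t x, (M.iterTranspose N u v t).2 ((M.iterTranspose N u v t).1 x) = x
  | 0, x => hvu x
  | t + 1, F => ContinuousLinearMap.ext fun x =>
    congrArg (M.toFunctional F) (iterTranspose_snd_fst hvu t x)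

lemma semiconj_precomp_l {a : α} {b : β} {w : M.X →L[ℂ] N.X}
    (hw : Semiconj w (M.r a) (N.r b)) :
    Semiconj (ContinuousLinearMap.precomp ℂ w) (N.dual.l b) (M.dual.l a) := fun F =>
  ContinuousLinearMap.ext fun x => congrArg (show N.X →L[ℂ] ℂ from F) (hw x).symm

lemma semiconj_precomp_r {a : α} {b : β} {w : M.X →L[ℂ] N.X}
    (hw : Semiconj w (M.l a) (N.l b)) :
    Semiconj (ContinuousLinearMap.precomp ℂ w) (N.dual.r b) (M.dual.r a) := fun F =>
  ContinuousLinearMap.ext fun x => congrArg (show N.X →L[ℂ] ℂ from F) (hw x).symm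

variable {φ : α → β}

lemma iterTranspose_fst_semiconj_even (hl : ∀ a, Semiconj u (M.l a) (N.l (φ a)))
    (hr : ∀ a, Semiconj u (M.r a) (N.r (φ a))) : ∀ t a,
    Semiconj (M.iterTranspose N u v (2 * t)).1 ((M.iterDual (2 * t)).l a)
        ((N.iterDual (2 * t)).l (φ a)) ∧
      Semiconj (M.iterTranspose N u v (2 * t)).1 ((M.iterDual (2 * t)).r a)
        ((N.iterDual (2 * t)).r (φ a))
  | 0, a => ⟨hl a, hr a⟩
  | t + 1, a => by
    obtain ⟨hl', hr'⟩ := iterTranspose_fst_semiconj_even hl hr t a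
    exact ⟨semiconj_precomp_l (semiconj_precomp_r hl'),
      semiconj_precomp_r (semiconj_precomp_l hr')⟩

lemma iterTranspose_snd_semiconj_odd (hl : ∀ a, Semiconj u (M.l a) (N.l (φ a)))
    (hr : ∀ a, Semiconj u (M.r a) (N.r (φ a))) (t : ℕ) (a : α) :
    Semiconj (M.iterTranspose N u v (2 * t + 1)).2 ((N.iterDual (2 * t + 1)).l (φ a))
        ((M.iterDual (2 * t + 1)).l a) ∧
      Semiconj (M.iterTranspose N u v (2 * t + 1)).2 ((N.iterDual (2 * t + 1)).r (φ a))
        ((M.iterDual (2 * t + 1)).r a) :=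
  ⟨semiconj_precomp_l (iterTranspose_fst_semiconj_even hl hr t a).2,
    semiconj_precomp_r (iterTranspose_fst_semiconj_even hl hr t a).1⟩

end IterTranspose

section Laws

variable [NonUnitalRing α] [Module ℂ α]

structure IsBimodule (M : BiMod α) : Prop where
  l_mul : ∀ a b x, M.l (a * b) x = M.l a (M.l b x)
  r_mul : ∀ a b x, M.r (a * b) x = M.r b (M.r a x)
  l_add : ∀ a b x, M.l (a + b) x = M.l a x + M.l b x
  r_add : ∀ a b x, M.r (a + b) x = M.r a x + M.r b x
  l_smul : ∀ (c : ℂ) a x, M.l (c • a) x = c • M.l a x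
  r_smul : ∀ (c : ℂ) a x, M.r (c • a) x = c • M.r a x
  l_r_comm : ∀ a b x, M.l a (M.r b x) = M.r b (M.l a x)

variable {M : BiMod α}

lemma IsBimodule.dual (hM : M.IsBimodule) : M.dual.IsBimodule where
  l_mul a b F := ContinuousLinearMap.ext fun x =>
    congrArg (show M.X →L[ℂ] ℂ from F) (hM.r_mul a b x)
  r_mul a b F := ContinuousLinearMap.ext fun x =>
    congrArg (show M.X →L[ℂ] ℂ from F) (hM.l_mul a b x)
  l_add a b F := ContinuousLinearMap.ext fun x =>
    (congrArg (show M.X →L[ℂ] ℂ from F) (hM.r_add a b x)).trans (map_add _ _ _)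
  r_add a b F := ContinuousLinearMap.ext fun x =>
    (congrArg (show M.X →L[ℂ] ℂ from F) (hM.l_add a b x)).trans (map_add _ _ _)
  l_smul c a F := ContinuousLinearMap.ext fun x =>
    (congrArg (show M.X →L[ℂ] ℂ from F) (hM.r_smul c a x)).trans (map_smul _ _ _)
  r_smul c a F := ContinuousLinearMap.ext fun x =>
    (congrArg (show M.X →L[ℂ] ℂ from F) (hM.l_smul c a x)).trans (map_smul _ _ _)
  l_r_comm a b F := ContinuousLinearMap.ext fun x =>
    congrArg (show M.X →L[ℂ] ℂ from F) (hM.l_r_comm b a x)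

lemma IsBimodule.iterDual (hM : M.IsBimodule) : ∀ t, (M.iterDual t).IsBimodule
  | 0 => hM
  | t + 1 => (IsBimodule.iterDual hM t).dual

lemma IsBimodule.ad_mul (hM : M.IsBimodule) (g : M.X) (a b : α) :
    M.ad g (a * b) = M.l a (M.ad g b) + M.r b (M.ad g a) := by
  simp only [ad, hM.l_mul, hM.r_mul, map_sub, hM.l_r_comm]
  abel

end Laws

lemma iterDual_l_one_and_r_one [One α] {M : BiMod α} (hl : ∀ x, M.l 1 x = x)
    (hr : ∀ x, M.r 1 x = x) :
    ∀ t, (∀ x, (M.iterDual t).l 1 x = x) ∧ ∀ x, (M.iterDual t).r 1 x = x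
  | 0 => ⟨hl, hr⟩
  | t + 1 => by
    obtain ⟨hl', hr'⟩ := iterDual_l_one_and_r_one hl hr t
    exact ⟨fun F => ContinuousLinearMap.ext fun x => congrArg (M.toFunctional F) (hr' x),
      fun F => ContinuousLinearMap.ext fun x => congrArg (M.toFunctional F) (hl' x)⟩

end BiMod

section Derivations

open Function

variable {α β : Type} [NonUnitalRing α] [Module ℂ α] [TopologicalSpace α]
  [NonUnitalRing β] [Module ℂ β] [TopologicalSpace β]

lemma selfBiMod_isBimodule [SMulCommClass ℂ α α] [IsScalarTower ℂ α α] [ContinuousMul α] :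
    (selfBiMod α).IsBimodule where
  l_mul a b (x : α) := mul_assoc a b x
  r_mul a b (x : α) := (mul_assoc x a b).symm
  l_add a b (x : α) := add_mul a b x
  r_add a b (x : α) := mul_add x a b
  l_smul c a (x : α) := smul_mul_assoc c a x
  r_smul c a (x : α) := mul_smul_comm c x a
  l_r_comm a b (x : α) := (mul_assoc a x b).symm

instance selfBiMod.continuousSMul [SMulCommClass ℂ α α] [IsScalarTower ℂ α α]
    [ContinuousMul α] [ContinuousSMul ℂ α] : ContinuousSMul ℂ (selfBiMod α).X :=
  ‹ContinuousSMul ℂ α›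

lemma IsContDerivation.comp_semiconj {M : BiMod α} {N : BiMod β} {D : β →L[ℂ] N.X}
    (hD : IsContDerivation β N D) (φ : α →L[ℂ] β) (hφ : ∀ a b, φ (a * b) = φ a * φ b)
    (w : N.X →L[ℂ] M.X) (hl : ∀ a, Semiconj w (N.l (φ a)) (M.l a))
    (hr : ∀ a, Semiconj w (N.r (φ a)) (M.r a)) :
    IsContDerivation α M (w.comp (D.comp φ)) := fun a b => by
  simp only [ContinuousLinearMap.comp_apply, hφ, hD (φ a) (φ b), map_add, (hl a).eq, (hr b).eq]

lemma IsContDerivation.sub_ad_mul {M : BiMod α} (hM : M.IsBimodule) {D : α →L[ℂ] M.X}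
    (hD : IsContDerivation α M D) (g : M.X) (a b : α) :
    D (a * b) - M.ad g (a * b) = M.l a (D b - M.ad g b) + M.r b (D a - M.ad g a) := by
  rw [hD, hM.ad_mul, map_sub, map_sub]
  abel

lemma IsContDerivation.map_one {R : Type} [Ring R] [Module ℂ R] [TopologicalSpace R] {M : BiMod R}
    {D : R →L[ℂ] M.X} (hD : IsContDerivation R M D) (hl : M.l 1 (D 1) = D 1)
    (hr : M.r 1 (D 1) = D 1) : D 1 = 0 := by
  have h := hD 1 1
  rw [one_mul, hl, hr] at h
  simpa using h

end Derivations

lemma Submodule.exists_dual_ne_zero_of_notMem {E : Type} [AddCommGroup E] [Module ℂ E]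
    [TopologicalSpace E] [IsTopologicalAddGroup E] [ContinuousSMul ℂ E] [LocallyConvexSpace ℝ E]
    (S : Submodule ℂ E) (hS : IsClosed (S : Set E)) {x : E} (hx : x ∉ S) :
    ∃ f : StrongDual ℂ E, f x ≠ 0 ∧ ∀ y ∈ S, f y = 0 := by
  obtain ⟨f, u, hfx, hfS⟩ :=
    RCLike.geometric_hahn_banach_point_closed (𝕜 := ℂ) (S.restrictScalars ℝ).convex hS hx
  have hu : u < 0 := by simpa using hfS 0 S.zero_mem
  refine ⟨f, fun h0 => by simp [h0] at hfx; linarith, fun y hy => by_contra fun hy0 => ?_⟩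
  -- `f` would take the value `u` on a multiple of `y`
  have := hfS (((u : ℂ) * (f y)⁻¹) • y) (S.smul_mem _ hy)
  rw [map_smul, smul_eq_mul, mul_assoc, inv_mul_cancel₀ hy0, mul_one] at this
  simp at this

section Essential

variable {A : Type} [NonUnitalRing A] [Module ℂ A] [TopologicalSpace A]

lemma exists_dual_ne_zero_mul_eq_zero [IsTopologicalAddGroup A] [ContinuousSMul ℂ A]
    [LocallyConvexSpace ℝ A] (hA : ¬ IsEssential A) :
    ∃ f : StrongDual ℂ A, f ≠ 0 ∧ ∀ a b, f (a * b) = 0 := by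
  set S := Submodule.span ℂ {x : A | ∃ a b : A, x = a * b}
  obtain ⟨x, hx⟩ : ∃ x, x ∉ S.topologicalClosure := by
    simpa [IsEssential, Dense, ← Submodule.topologicalClosure_coe] using hA
  obtain ⟨f, hfx, hfS⟩ :=
    S.topologicalClosure.exists_dual_ne_zero_of_notMem S.isClosed_topologicalClosure hx
  exact ⟨f, fun hf => hfx (by simp [hf]), fun a b =>
    hfS _ (S.le_topologicalClosure (Submodule.subset_span ⟨a, b, rfl⟩))⟩

lemma IsEssential.clm_ext (hA : IsEssential A) {E : Type} [AddCommGroup E] [Module ℂ E]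
    [TopologicalSpace E] [T2Space E] {f g : A →L[ℂ] E} (h : ∀ a b, f (a * b) = g (a * b)) :
    f = g :=
  ContinuousLinearMap.ext_on hA fun _ ⟨a, b, hx⟩ => hx ▸ h a b

/-- Otherwise some `f ≠ 0` kills products, and `a ↦ f a • f^(2m)`, with `f^(2m) ∈ A^(2m+1)`
the image of `f`, is a derivation that is not inner: pairing with the image of `a` gives
`f a ^ 2`. -/
lemma isEssential_of_nWeaklyAmenable_odd [SMulCommClass ℂ A A] [IsScalarTower ℂ A A]
    [IsTopologicalAddGroup A] [ContinuousSMul ℂ A] [ContinuousMul A] [LocallyConvexSpace ℝ A]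
    {m : ℕ} (h : NWeaklyAmenable A (2 * m + 1)) : IsEssential A := by
  by_contra hA
  obtain ⟨f, hf0, hfmul⟩ := exists_dual_ne_zero_mul_eq_zero hA
  obtain ⟨a₀, ha₀⟩ := DFunLike.ne_iff.1 hf0
  obtain ⟨x, φ, hφx, hx, hφl, hφr⟩ : ∃ (x : ((selfBiMod A).iterDual (2 * m)).X)
      (φ : ((selfBiMod A).iterDual (2 * m + 1)).X), (selfBiMod A).toFunctional φ x = f a₀ ∧
      ((selfBiMod A).iterDual (2 * m)).l a₀ x = ((selfBiMod A).iterDual (2 * m)).r a₀ x ∧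
      (∀ a, ((selfBiMod A).iterDual (2 * m + 1)).l a φ = 0) ∧
      ∀ a, ((selfBiMod A).iterDual (2 * m + 1)).r a φ = 0 :=
    ⟨_, _, (selfBiMod A).iterEvalPair_snd_apply_fst a₀ f (2 * m),
      (selfBiMod A).iterEvalPair_fst_l_eq_r a₀ f rfl m,
      fun a => (selfBiMod A).iterEvalPair_snd_l_eq_zero a₀ f
        (ContinuousLinearMap.ext fun x => hfmul x a) m,
      fun a => (selfBiMod A).iterEvalPair_snd_r_eq_zero a₀ f
        (ContinuousLinearMap.ext fun x => hfmul a x) m⟩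
  have := (selfBiMod A).iterCSM inferInstance (2 * m + 1)
  let D : A →L[ℂ] ((selfBiMod A).iterDual (2 * m + 1)).X := f.smulRight φ
  have hD : IsContDerivation A _ D := fun a b => by
    simp only [D, ContinuousLinearMap.smulRight_apply, map_smul, hfmul, hφl, hφr, zero_smul,
      smul_zero, add_zero]
  obtain ⟨G, hG⟩ := h D hD
  have hsq : f a₀ * f a₀ = 0 := calc
    f a₀ * f a₀ = f a₀ * (selfBiMod A).toFunctional φ x := by rw [hφx]
    _ = (selfBiMod A).toFunctional (D a₀) x := rfl
    _ = (selfBiMod A).toFunctional G (((selfBiMod A).iterDual (2 * m)).r a₀ x) -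
        (selfBiMod A).toFunctional G (((selfBiMod A).iterDual (2 * m)).l a₀ x) := by
      rw [hG a₀]; rfl
    _ = 0 := by rw [hx, sub_self]
  exact ha₀ (mul_self_eq_zero.1 hsq)

end Essential

namespace Unitization

open Function

variable {A : Type} [NonUnitalRing A] [Module ℂ A] [SMulCommClass ℂ A A] [IsScalarTower ℂ A A]
  [TopologicalSpace A]

lemma derivation_eq_ad_of_inr {N : BiMod (Unitization ℂ A)} (hN : N.IsBimodule)
    (h1l : ∀ x, N.l 1 x = x) (h1r : ∀ x, N.r 1 x = x) {D : Unitization ℂ A →L[ℂ] N.X}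
    (hD : IsContDerivation (Unitization ℂ A) N D) {g : N.X} (hinr : ∀ a : A, D a = N.ad g a)
    (x : Unitization ℂ A) : D x = N.ad g x := by
  have hD1 : D 1 = 0 := hD.map_one (h1l _) (h1r _)
  induction x using Unitization.ind with
  | inl_add_inr r a =>
    rw [← algebraMap_eq_inl, Algebra.algebraMap_eq_smul_one, map_add, map_smul, hD1, smul_zero,
      zero_add, hinr]
    simp only [BiMod.ad, hN.l_add, hN.r_add, hN.l_smul, hN.r_smul, h1l, h1r]
    abel

def inrCLM : A →L[ℂ] Unitization ℂ A :=
  ⟨inrHom ℂ ℂ A, continuous_induced_rng.2 (continuous_const.prodMk continuous_id)⟩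

def sndCLM : Unitization ℂ A →L[ℂ] A :=
  ⟨sndHom ℂ ℂ A, continuous_snd.comp continuous_induced_dom⟩

def fstCLM : Unitization ℂ A →L[ℂ] ℂ :=
  ⟨(fstHom ℂ A).toLinearMap, continuous_fst.comp continuous_induced_dom⟩

variable [IsTopologicalAddGroup A] [ContinuousSMul ℂ A] [ContinuousMul A]

local notation "𝔸" => selfBiMod A
local notation "𝔹" => selfBiMod (Unitization ℂ A)

def iterInr (t : ℕ) : ((𝔸).iterDual t).X →L[ℂ] ((𝔹).iterDual t).X :=
  ((𝔸).iterTranspose 𝔹 (inrCLM (A := A)) sndCLM t).1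

def iterSnd (t : ℕ) : ((𝔹).iterDual t).X →L[ℂ] ((𝔸).iterDual t).X :=
  ((𝔸).iterTranspose 𝔹 (inrCLM (A := A)) sndCLM t).2

/-- The images `(e_t, e*_t)` of `1 ∈ A#` and of `e* = fst ∈ A#'`. -/
def unitPair (t : ℕ) : ((𝔹).iterDual t).X × ((𝔹).iterDual (t + 1)).X :=
  (𝔹).iterEvalPair (1 : Unitization ℂ A) fstCLM t

lemma inrCLM_semiconj_l (a : A) : Semiconj (inrCLM (A := A)) ((𝔸).l a) ((𝔹).l a) :=
  fun x => inr_mul ℂ a x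

lemma inrCLM_semiconj_r (a : A) : Semiconj (inrCLM (A := A)) ((𝔸).r a) ((𝔹).r a) :=
  fun x => inr_mul ℂ x a

lemma iterSnd_iterInr (t : ℕ) (x : ((𝔸).iterDual t).X) : iterSnd t (iterInr t x) = x :=
  BiMod.iterTranspose_snd_fst (M := 𝔸) (N := 𝔹) (fun (a : A) => snd_inr ℂ a) t x

lemma iterSnd_semiconj_odd (t : ℕ) (a : A) :
    Semiconj (iterSnd (2 * t + 1)) (((𝔹).iterDual (2 * t + 1)).l a)
        (((𝔸).iterDual (2 * t + 1)).l a) ∧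
      Semiconj (iterSnd (2 * t + 1)) (((𝔹).iterDual (2 * t + 1)).r a)
        (((𝔸).iterDual (2 * t + 1)).r a) :=
  BiMod.iterTranspose_snd_semiconj_odd inrCLM_semiconj_l inrCLM_semiconj_r t a

lemma iterInr_iterSnd_add_smul : ∀ (t : ℕ) (x : ((𝔹).iterDual t).X),
    iterInr t (iterSnd t x) + (𝔹).toFunctional (unitPair t).2 x • (unitPair t).1 = x
  | 0, x => by
    change ((x : Unitization ℂ A).snd : Unitization ℂ A) + (x : Unitization ℂ A).fst • 1 = x
    ext <;> simp
  | t + 1, F => ContinuousLinearMap.ext fun y => by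
    have hy := congrArg ((𝔹).toFunctional F) (iterInr_iterSnd_add_smul t y)
    rw [map_add, map_smul, smul_eq_mul] at hy
    change (𝔹).toFunctional F (iterInr t (iterSnd t y)) +
      (𝔹).toFunctional F (unitPair t).1 * (𝔹).toFunctional (unitPair t).2 y =
        (𝔹).toFunctional F y
    linear_combination hy

lemma eq_smul_of_iterSnd_eq_zero {t : ℕ} {F : ((𝔹).iterDual (t + 1)).X}
    (hF : iterSnd (t + 1) F = 0) :
    F = (𝔹).toFunctional F (unitPair t).1 • (unitPair t).2 := by
  have := iterInr_iterSnd_add_smul (t + 1) F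
  rw [hF, map_zero, zero_add] at this
  exact this.symm

lemma unitPair_fst_l_eq_r (t : ℕ) (b : Unitization ℂ A) :
    ((𝔹).iterDual (2 * t)).l b (unitPair (2 * t)).1 =
      ((𝔹).iterDual (2 * t)).r b (unitPair (2 * t)).1 :=
  (𝔹).iterEvalPair_fst_l_eq_r (1 : Unitization ℂ A) fstCLM
    ((mul_one b).trans (one_mul b).symm) t

lemma unitPair_snd_l_eq_zero (t : ℕ) (a : A) :
    ((𝔹).iterDual (2 * t + 1)).l a (unitPair (2 * t)).2 = 0 :=
  (𝔹).iterEvalPair_snd_l_eq_zero (1 : Unitization ℂ A) fstCLM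
    (ContinuousLinearMap.ext fun (x : Unitization ℂ A) => by
      change (x * a).fst = 0
      simp) t

lemma unitPair_snd_r_eq_zero (t : ℕ) (a : A) :
    ((𝔹).iterDual (2 * t + 1)).r a (unitPair (2 * t)).2 = 0 :=
  (𝔹).iterEvalPair_snd_r_eq_zero (1 : Unitization ℂ A) fstCLM
    (ContinuousLinearMap.ext fun (x : Unitization ℂ A) => by
      change ((a : Unitization ℂ A) * x).fst = 0
      simp) t

section OddDerivation

variable {m : ℕ}

lemma toFunctional_sub_ad_apply_unitPair (F g : ((𝔹).iterDual (2 * m + 1)).X)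
    (b : Unitization ℂ A) :
    (𝔹).toFunctional (F - ((𝔹).iterDual (2 * m + 1)).ad g b) (unitPair (2 * m)).1 =
      (𝔹).toFunctional F (unitPair (2 * m)).1 := by
  change (𝔹).toFunctional F _ - ((𝔹).toFunctional g (((𝔹).iterDual (2 * m)).r b _) -
    (𝔹).toFunctional g (((𝔹).iterDual (2 * m)).l b _)) = _
  rw [unitPair_fst_l_eq_r, sub_self, sub_zero]

lemma derivation_sub_ad_eq_smul
    {D : Unitization ℂ A →L[ℂ] ((𝔹).iterDual (2 * m + 1)).X}
    {f : ((𝔸).iterDual (2 * m + 1)).X}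
    (hf : ∀ a : A, iterSnd (A := A) (2 * m + 1) (D a) = ((𝔸).iterDual (2 * m + 1)).ad f a)
    (a : A) :
    D a - ((𝔹).iterDual (2 * m + 1)).ad (iterInr (2 * m + 1) f) a =
      (𝔹).toFunctional (D a) (unitPair (2 * m)).1 • (unitPair (A := A) (2 * m)).2 := by
  have hsnd : iterSnd (2 * m + 1)
      (D a - ((𝔹).iterDual (2 * m + 1)).ad (iterInr (2 * m + 1) f) a) = 0 := by
    rw [map_sub, hf, BiMod.ad, BiMod.ad, map_sub, (iterSnd_semiconj_odd m a).1.eq,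
      (iterSnd_semiconj_odd m a).2.eq, iterSnd_iterInr, sub_self]
  rw [← toFunctional_sub_ad_apply_unitPair (D a) (iterInr (2 * m + 1) f) a]
  exact eq_smul_of_iterSnd_eq_zero hsnd

lemma derivation_sub_ad_mul_eq_zero
    {D : Unitization ℂ A →L[ℂ] ((𝔹).iterDual (2 * m + 1)).X}
    {f : ((𝔸).iterDual (2 * m + 1)).X}
    (hD : IsContDerivation (Unitization ℂ A) ((𝔹).iterDual (2 * m + 1)) D)
    (hf : ∀ a : A, iterSnd (A := A) (2 * m + 1) (D a) = ((𝔸).iterDual (2 * m + 1)).ad f a)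
    (a b : A) :
    D (a * b : A) - ((𝔹).iterDual (2 * m + 1)).ad (iterInr (2 * m + 1) f) (a * b : A) = 0 := by
  rw [inr_mul, hD.sub_ad_mul (selfBiMod_isBimodule.iterDual _), derivation_sub_ad_eq_smul hf,
    derivation_sub_ad_eq_smul hf, map_smul, map_smul, unitPair_snd_l_eq_zero,
    unitPair_snd_r_eq_zero, smul_zero, smul_zero, add_zero]

lemma derivation_inr_eq_ad (hA : IsEssential A)
    {D : Unitization ℂ A →L[ℂ] ((𝔹).iterDual (2 * m + 1)).X}
    {f : ((𝔸).iterDual (2 * m + 1)).X}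
    (hD : IsContDerivation (Unitization ℂ A) ((𝔹).iterDual (2 * m + 1)) D)
    (hf : ∀ a : A, iterSnd (A := A) (2 * m + 1) (D a) = ((𝔸).iterDual (2 * m + 1)).ad f a)
    (a : A) : D a = ((𝔹).iterDual (2 * m + 1)).ad (iterInr (2 * m + 1) f) a := by
  have := (𝔹).iterCSM inferInstance (2 * m)
  let ψ : A →L[ℂ] ℂ := (show (((𝔹).iterDual (2 * m)).X →L[ℂ] ℂ) →L[ℂ] ℂ from
    ((𝔹).iterDual (2 * m)).evalEmbed (unitPair (2 * m)).1).comp (D.comp inrCLM)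
  have hψ : ψ = 0 := hA.clm_ext fun a b => by
    change (𝔹).toFunctional (D (a * b : A)) (unitPair (2 * m)).1 = 0
    rw [← toFunctional_sub_ad_apply_unitPair _ (iterInr (2 * m + 1) f),
      derivation_sub_ad_mul_eq_zero hD hf a b]
    rfl
  have := derivation_sub_ad_eq_smul hf a
  rwa [show (𝔹).toFunctional (D a) (unitPair (2 * m)).1 = ψ a from rfl, hψ, zero_apply,
    zero_smul, sub_eq_zero] at this

end OddDerivation

end Unitization

open Unitization in
theorem NWeaklyAmenable.unitization_of_odd {A : Type} [NonUnitalRing A] [Module ℂ A]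
    [SMulCommClass ℂ A A] [IsScalarTower ℂ A A] [TopologicalSpace A] [IsTopologicalAddGroup A]
    [ContinuousSMul ℂ A] [ContinuousMul A] [LocallyConvexSpace ℝ A] {m : ℕ}
    (h : NWeaklyAmenable A (2 * m + 1)) : NWeaklyAmenable (Unitization ℂ A) (2 * m + 1) := by
  intro D hD
  obtain ⟨f, hf⟩ := h _ (hD.comp_semiconj inrCLM (inr_mul ℂ) (iterSnd (2 * m + 1))
    (fun a => (iterSnd_semiconj_odd m a).1) (fun a => (iterSnd_semiconj_odd m a).2))
  obtain ⟨h1l, h1r⟩ := BiMod.iterDual_l_one_and_r_one (M := selfBiMod (Unitization ℂ A))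
    (fun x : Unitization ℂ A => one_mul x) (fun x : Unitization ℂ A => mul_one x) (2 * m + 1)
  exact ⟨iterInr (2 * m + 1) f, derivation_eq_ad_of_inr (selfBiMod_isBimodule.iterDual _) h1l h1r
    hD (derivation_inr_eq_ad (isEssential_of_nWeaklyAmenable_odd h) hD hf)⟩

theorem nWeaklyAmenable_odd_unitization_of_general (A : Type) [NonUnitalRing A] [Module ℂ A] [SMulCommClass ℂ A A]
    [IsScalarTower ℂ A A] [UniformSpace A] [IsUniformAddGroup A] [ContinuousSMul ℂ A]
    [ContinuousMul A] (hMontel : IsMontelSpace A) (n : ℕ) (hn : 1 ≤ n)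
    (h : NWeaklyAmenable A (2 * n - 1)) :
    NWeaklyAmenable (Unitization ℂ A) (2 * n - 1) := by
  obtain ⟨m, rfl⟩ : ∃ m, n = m + 1 := ⟨n - 1, by omega⟩
  have : LocallyConvexSpace ℝ A := hMontel.1
  rw [show 2 * (m + 1) - 1 = 2 * m + 1 by omega] at h ⊢
  exact NWeaklyAmenable.unitization_of_odd h

/-- If a non-unital Montel Fréchet algebra `A` is `(2n-1)`-weakly amenable (`n ≥ 1`),
then its unitization `A#` is `(2n-1)`-weakly amenable. -/
theorem nWeaklyAmenable_odd_unitization_of (A : Type) [NonUnitalRing A] [Module ℂ A] [SMulCommClass ℂ A A]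
    [IsScalarTower ℂ A A] [UniformSpace A] [IsUniformAddGroup A] [ContinuousSMul ℂ A]
    [ContinuousMul A] [CompleteSpace A] [T2Space A] (hA : FrechetSeminorms A)
    (hnu : ¬ HasIdentity A) (hMontel : IsMontelSpace A) (n : ℕ) (hn : 1 ≤ n)
    (h : NWeaklyAmenable A (2 * n - 1)) :
    NWeaklyAmenable (Unitization ℂ A) (2 * n - 1) :=
  nWeaklyAmenable_odd_unitization_of_general A hMontel n hn h
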